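/- arXiv:math/0602110 — 2 statements merged into one kernel-verified Lean document; each statement's English description precedes it below -/
import Mathlib

section
/- Let H be a Hilbert space and let T be a bounded selfadjoint operator on H. Then T is Fredholm if and only if there exists ε > 0 such that for every continuous function φ : ℝ → ℂ with support contained in [-ε, ε], the operator φ(T) (given by the continuous functional calculus) is compact. -/
/-!
If `S T - 1` is compact, a compactness argument shows that `T` is bounded below on `(ker T)ᗮ`.
For selfadjoint `T` this makes `r - T` bounded below, hence invertible, for all small real
`r ≠ 0`: the point `0` is isolated in the spectrum. If `φ` is supported inside this gap then
`T φ(T) = 0`, so `φ(T) = -(S T - 1) φ(T)` is compact. Conversely, if `φ = 1` near `0` and `φ(T)`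
is compact, then `ψ(T)` with `ψ(x) = (1 - φ(x)) / x` inverts `T` modulo `φ(T)`.
-/

open Filter Topology

variable {H : Type*} [NormedAddCommGroup H] [InnerProductSpace ℂ H] [CompleteSpace H]

/-- `T` is Fredholm: invertible modulo compact operators. -/
def IsFredholmOp (T : H →L[ℂ] H) : Prop :=
  ∃ S : H →L[ℂ] H, IsCompactOperator ⇑(S * T - 1) ∧ IsCompactOperator ⇑(T * S - 1)

theorem isCompactOperator_of_mul_eq_zero {𝕜 E : Type*} [NontriviallyNormedField 𝕜]
    [NormedAddCommGroup E] [NormedSpace 𝕜 E] {S T A : E →L[𝕜] E}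
    (hK : IsCompactOperator ⇑(S * T - 1)) (hA : T * A = 0) : IsCompactOperator ⇑A := by
  have hA_eq : A = -((S * T - 1) * A) := by rw [sub_mul, mul_assoc, hA]; simp
  rw [hA_eq]
  exact (hK.comp_clm A).neg

section InnerProductSpace

variable {𝕜 E : Type*} [RCLike 𝕜] [NormedAddCommGroup E] [InnerProductSpace 𝕜 E]

theorem exists_pos_mul_norm_le_of_isCompactOperator_mul_sub_one {S T : E →L[𝕜] E}
    (hK : IsCompactOperator ⇑(S * T - 1)) :
    ∃ c > (0 : ℝ), ∀ x ∈ T.kerᗮ, c * ‖x‖ ≤ ‖T x‖ := by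
  by_contra! h
  have hunit_vec : ∀ n : ℕ, ∃ u ∈ T.kerᗮ, ‖u‖ = 1 ∧ ‖T u‖ < 1 / (n + 1) := by
    intro n
    obtain ⟨x, hx, hTx⟩ := h (1 / (n + 1)) (by positivity)
    have hx0 : ‖x‖ ≠ 0 := fun h0 => by simp [norm_eq_zero.mp h0] at hTx
    refine ⟨(‖x‖⁻¹ : 𝕜) • x, Submodule.smul_mem _ _ hx, ?_, ?_⟩
    · simp [norm_smul, hx0]
    · rw [map_smul, norm_smul, norm_inv, RCLike.norm_ofReal, abs_norm,
        inv_mul_lt_iff₀ (by positivity), mul_comm]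
      exact hTx
  choose u hu_mem hu_norm hTu using hunit_vec
  obtain ⟨C, hC, hKC⟩ := hK.image_closedBall_subset_compact 1
  obtain ⟨y, -, σ, hσ, hKy⟩ := hC.tendsto_subseq fun n =>
    hKC ⟨u n, by simp [hu_norm], rfl⟩
  have hTu0 : Tendsto (fun n => T (u n)) atTop (𝓝 0) :=
    squeeze_zero_norm (fun n => (hTu n).le) tendsto_one_div_add_atTop_nhds_zero_nat
  -- `u = S (T u) - (S T - 1) u`, and both terms converge along the subsequence
  have hlim : Tendsto (fun k => u (σ k)) atTop (𝓝 (-y)) := by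
    have := ((S.continuous.tendsto 0).comp (hTu0.comp hσ.tendsto_atTop)).sub hKy
    simpa using this
  have hy_mem : -y ∈ T.kerᗮ :=
    (Submodule.isClosed_orthogonal _).mem_of_tendsto hlim (.of_forall fun k => hu_mem _)
  have hy_ker : -y ∈ T.ker :=
    tendsto_nhds_unique ((T.continuous.tendsto _).comp hlim) (hTu0.comp hσ.tendsto_atTop)
  have hy_norm : ‖-y‖ = 1 :=
    tendsto_nhds_unique hlim.norm (by simp [hu_norm])
  have hy0 : -y = 0 := (Submodule.inf_orthogonal_eq_bot T.ker).le ⟨hy_ker, hy_mem⟩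
  simp [hy0] at hy_norm

variable [CompleteSpace E]

theorem IsSelfAdjoint.isUnit_of_mul_norm_le {A : E →L[𝕜] E} (hA : IsSelfAdjoint A) {c : ℝ}
    (hc : 0 < c) (h : ∀ x, c * ‖x‖ ≤ ‖A x‖) : IsUnit A := by
  have hanti : ∃ K, AntilipschitzWith K A := antilipschitzWith_iff_exists_mul_le_norm.mpr ⟨c, hc, h⟩
  rw [ContinuousLinearMap.isUnit_iff_bijective,
    ContinuousLinearMap.bijective_iff_dense_range_and_antilipschitz]
  refine ⟨?_, hanti⟩
  rw [Submodule.topologicalClosure_eq_top_iff, hA.isSymmetric.orthogonal_range,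
    LinearMap.ker_eq_bot]
  exact hanti.choose_spec.injective

theorem IsSelfAdjoint.min_mul_norm_le_norm_smul_sub_apply {T : E →L[𝕜] E} (hT : IsSelfAdjoint T)
    {c : ℝ} (hc : ∀ x ∈ T.kerᗮ, c * ‖x‖ ≤ ‖T x‖) {r : ℝ} (hr : |r| ≤ c) (x : E) :
    min |r| (c - |r|) * ‖x‖ ≤ ‖(r : 𝕜) • x - T x‖ := by
  have : CompleteSpace T.ker := T.isClosed_ker.completeSpace_coe
  obtain ⟨u, hu, v, hv, rfl⟩ := T.ker.exists_add_mem_mem_orthogonal x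
  have hTv : T v ∈ T.kerᗮ := by
    rw [← hT.isSymmetric.orthogonal_range]
    exact Submodule.le_orthogonal_orthogonal _ (LinearMap.mem_range_self _ v)
  set w := (r : 𝕜) • v - T v
  have hw : w ∈ T.kerᗮ := Submodule.sub_mem _ (Submodule.smul_mem _ _ hv) hTv
  have hw_norm : (c - |r|) * ‖v‖ ≤ ‖w‖ :=
    calc (c - |r|) * ‖v‖ ≤ ‖T v‖ - ‖(r : 𝕜) • v‖ := by
          rw [norm_smul, RCLike.norm_ofReal]; linarith [hc v hv]
      _ ≤ ‖w‖ := by rw [norm_sub_rev]; exact norm_sub_norm_le _ _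
  have hsplit : (r : 𝕜) • (u + v) - T (u + v) = (r : 𝕜) • u + w := by
    rw [map_add, show T u = 0 from hu, smul_add, zero_add, add_sub_assoc]
  have hx_sq : ‖u + v‖ ^ 2 = ‖u‖ ^ 2 + ‖v‖ ^ 2 := by
    simp only [sq]
    exact norm_add_sq_eq_norm_sq_add_norm_sq_of_inner_eq_zero _ _
      (Submodule.inner_right_of_mem_orthogonal hu hv)
  have hy_sq : ‖(r : 𝕜) • u + w‖ ^ 2 = |r| ^ 2 * ‖u‖ ^ 2 + ‖w‖ ^ 2 := by
    rw [← mul_pow, ← RCLike.norm_ofReal (K := 𝕜), ← norm_smul]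
    simp only [sq]
    exact norm_add_sq_eq_norm_sq_add_norm_sq_of_inner_eq_zero _ _
      (Submodule.inner_right_of_mem_orthogonal (Submodule.smul_mem _ _ hu) hw)
  have hm : 0 ≤ min |r| (c - |r|) := le_min (abs_nonneg r) (sub_nonneg.mpr hr)
  rw [hsplit]
  refine le_of_pow_le_pow_left₀ two_ne_zero (norm_nonneg _) ?_
  rw [mul_pow, hx_sq, hy_sq]
  have hmu : min |r| (c - |r|) ^ 2 ≤ |r| ^ 2 := pow_le_pow_left₀ hm (min_le_left _ _) 2
  have hmv : (min |r| (c - |r|) * ‖v‖) ^ 2 ≤ ‖w‖ ^ 2 :=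
    pow_le_pow_left₀ (by positivity)
      ((mul_le_mul_of_nonneg_right (min_le_right _ _) (norm_nonneg v)).trans hw_norm) 2
  nlinarith [sq_nonneg ‖u‖]

theorem IsSelfAdjoint.ofReal_notMem_spectrum {T : E →L[𝕜] E} (hT : IsSelfAdjoint T) {c : ℝ}
    (hc : ∀ x ∈ T.kerᗮ, c * ‖x‖ ≤ ‖T x‖) {r : ℝ} (hr0 : r ≠ 0) (hr : |r| < c) :
    (r : 𝕜) ∉ spectrum 𝕜 T := by
  rw [spectrum.notMem_iff]
  have hsa : IsSelfAdjoint (algebraMap 𝕜 (E →L[𝕜] E) r - T) :=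
    ((RCLike.im_eq_zero_iff_isSelfAdjoint.mp (RCLike.ofReal_im r)).algebraMap _).sub hT
  refine hsa.isUnit_of_mul_norm_le (lt_min (abs_pos.mpr hr0) (sub_pos.mpr hr)) fun x => ?_
  simpa [Algebra.algebraMap_eq_smul_one] using
    hT.min_mul_norm_le_norm_smul_sub_apply hc hr.le x

end InnerProductSpace

theorem IsSelfAdjoint.le_norm_of_mem_spectrum {T : H →L[ℂ] H} (hT : IsSelfAdjoint T) {c : ℝ}
    (hc : ∀ x ∈ T.kerᗮ, c * ‖x‖ ≤ ‖T x‖) {z : ℂ} (hz : z ∈ spectrum ℂ T) (hz0 : z ≠ 0) :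
    c ≤ ‖z‖ := by
  obtain ⟨r, rfl⟩ : ∃ r : ℝ, z = r := ⟨z.re, hT.mem_spectrum_eq_re hz⟩
  by_contra! hlt
  exact hT.ofReal_notMem_spectrum hc (by simpa using hz0) (by simpa using hlt) hz

theorem mul_cfc_eq_zero {A : Type*} [CStarAlgebra A] {a : A} {f : ℂ → ℂ}
    (hf : ∀ z ∈ spectrum ℂ a, z ≠ 0 → f z = 0) : a * cfc f a = 0 := by
  by_cases ha : IsStarNormal a ∧ ContinuousOn f (spectrum ℂ a)
  · obtain ⟨_, hfc⟩ := ha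
    conv_lhs => lhs; rw [← cfc_id' ℂ a]
    rw [← cfc_mul (fun z : ℂ => z) f a (continuousOn_id' _) hfc, ← cfc_zero ℂ a]
    refine cfc_congr fun z hz => ?_
    by_cases hz0 : z = 0
    · simp [hz0]
    · simp [hf z hz hz0]
  · rw [cfc_apply_of_not_and a ha, mul_zero]

theorem continuous_one_sub_div_of_eventually_eq_one {𝕜 : Type*} [NormedField 𝕜] {f : 𝕜 → 𝕜}
    (hf : Continuous f) (h1 : ∀ᶠ z in 𝓝 0, f z = 1) : Continuous fun z => (1 - f z) / z := by
  refine continuous_iff_continuousAt.mpr fun z => ?_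
  by_cases hz : z = 0
  · subst hz
    refine (continuousAt_const (y := (0 : 𝕜))).congr (h1.mono fun w hw => ?_)
    simp [hw]
  · exact (continuousAt_const.sub hf.continuousAt).div continuousAt_id hz

theorem isFredholmOp_of_isCompactOperator_cfc {T : H →L[ℂ] H} [IsStarNormal T] {f : ℂ → ℂ}
    (hf : Continuous f) (h1 : ∀ᶠ z in 𝓝 0, f z = 1) (hK : IsCompactOperator ⇑(cfc f T)) :
    IsFredholmOp T := by
  set g : ℂ → ℂ := fun z => (1 - f z) / z
  have hg : Continuous g := continuous_one_sub_div_of_eventually_eq_one hf h1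
  have hgz : ∀ z, g z * z = 1 - f z := by
    intro z
    by_cases hz : z = 0
    · simp [g, hz, h1.self_of_nhds]
    · exact div_mul_cancel₀ _ hz
  have hST : cfc g T * T = 1 - cfc f T := by
    conv_lhs => rhs; rw [← cfc_id' ℂ T]
    rw [← cfc_mul g (fun z : ℂ => z) T hg.continuousOn (continuousOn_id' _), ← cfc_one ℂ T,
      ← cfc_sub 1 f T]
    exact cfc_congr fun z _ => hgz z
  have hTS : T * cfc g T = 1 - cfc f T := by
    have hcomm := (cfc_commute_cfc (fun z : ℂ => z) g T).eq
    rwa [cfc_id' ℂ T, hST] at hcomm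
  refine ⟨cfc g T, ?_, ?_⟩
  · rw [hST, sub_sub_cancel_left]; exact hK.neg
  · rw [hTS, sub_sub_cancel_left]; exact hK.neg

theorem exists_continuous_support_subset_Icc_eventually_eq_one {ε : ℝ} (hε : 0 < ε) :
    ∃ φ : ℝ → ℂ, Continuous φ ∧ Function.support φ ⊆ Set.Icc (-ε) ε ∧
      ∀ᶠ x in 𝓝 0, φ x = 1 := by
  let b : ContDiffBump (0 : ℝ) := ⟨ε / 2, ε, by positivity, by linarith⟩
  refine ⟨fun x => (b x : ℂ), Complex.continuous_ofReal.comp b.continuous, fun x hx => ?_, ?_⟩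
  · have hx : x ∈ Metric.ball 0 ε := b.support_eq ▸ Function.mem_support.mpr (by simpa using hx)
    rw [Metric.mem_ball, Real.dist_eq, sub_zero] at hx
    exact ⟨by linarith [neg_abs_le x], by linarith [le_abs_self x]⟩
  · filter_upwards [Metric.closedBall_mem_nhds (0 : ℝ) b.rIn_pos] with x hx
    simp [b.one_of_mem_closedBall hx]

theorem fredholm_iff_cfc_compact (T : H →L[ℂ] H) (hT : IsSelfAdjoint T) :
    IsFredholmOp T ↔
      ∃ ε > (0 : ℝ), ∀ φ : ℝ → ℂ, Continuous φ →
        Function.support φ ⊆ Set.Icc (-ε) ε →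
        IsCompactOperator ⇑(cfc (fun z : ℂ => φ z.re) T) := by
  constructor
  · rintro ⟨S, hST, -⟩
    obtain ⟨c, hc, hbound⟩ := exists_pos_mul_norm_le_of_isCompactOperator_mul_sub_one hST
    refine ⟨c / 2, by positivity, fun φ _ hφ => isCompactOperator_of_mul_eq_zero hST ?_⟩
    refine mul_cfc_eq_zero fun z hz hz0 => Function.notMem_support.mp fun hφz => ?_
    have hgap := hT.le_norm_of_mem_spectrum hbound hz hz0
    rw [hT.mem_spectrum_eq_re hz, Complex.norm_real, Real.norm_eq_abs] at hgap
    linarith [abs_le.mpr (hφ hφz)]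
  · rintro ⟨ε, hε, hcomp⟩
    have := hT.isStarNormal
    obtain ⟨φ, hφ, hφ_supp, hφ_one⟩ := exists_continuous_support_subset_Icc_eventually_eq_one hε
    exact isFredholmOp_of_isCompactOperator_cfc (by fun_prop)
      ((Complex.continuous_re.tendsto 0).eventually (by simpa using hφ_one))
      (hcomp φ hφ hφ_supp)
end

section
/- Let P and Q be orthogonal projections on a Hilbert space H with P − Q compact. Then the operator QP, viewed as an operator from the range of P to the range of Q, is Fredholm, and PQ (viewed from the range of Q to the range of P) is a parametrix for it: QP ∘ PQ − id_{ran Q} and PQ ∘ QP − id_{ran P} are compact. -/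
/-!
On `ran P` the operator `PQ - 1` equals `P (Q - P)`, so `compressedOp Q P` is a parametrix of
`compressedOp P Q` modulo compact operators on both sides; as `P` and `Q` are selfadjoint it is
moreover the adjoint of `compressedOp P Q`.

A compact left parametrix (`S T = 1 + K`, `K` compact) makes the kernel of `T` finite-dimensional,
since `K = -1` there, and the range of `T` closed: `T` is bounded below on a closed complement of
its kernel, because a sequence of unit vectors `u` with `T u → 0` has, by compactness of `K`, a
subsequence converging to a unit vector of that complement killed by `T`. Applied to the adjoint,
the same argument shows that `(ran T)ᗮ = ker T†` is finite-dimensional.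
-/

variable {H : Type*} [NormedAddCommGroup H] [InnerProductSpace ℂ H] [CompleteSpace H]

/-- An orthogonal projection: a selfadjoint idempotent. -/
def IsOrthProj (P : H →L[ℂ] H) : Prop := IsIdempotentElem P ∧ IsSelfAdjoint P

/-- The operator `Q ∘ P` viewed as a map from the range of `P` to the range of `Q`. -/
noncomputable def compressedOp (P Q : H →L[ℂ] H) :
    (LinearMap.range (P : H →ₗ[ℂ] H)) →L[ℂ] (LinearMap.range (Q : H →ₗ[ℂ] H)) :=
  (Q.comp (LinearMap.range (P : H →ₗ[ℂ] H)).subtypeL).codRestrict (LinearMap.range (Q : H →ₗ[ℂ] H))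
    (fun x => LinearMap.mem_range_self _ _)

/-- Fredholmness of an operator between (possibly different) spaces. -/
def IsFredholm {E F : Type*} [NormedAddCommGroup E] [NormedAddCommGroup F]
    [NormedSpace ℂ E] [NormedSpace ℂ F] (T : E →L[ℂ] F) : Prop :=
  FiniteDimensional ℂ (LinearMap.ker (T : E →ₗ[ℂ] F)) ∧ IsClosed (LinearMap.range (T : E →ₗ[ℂ] F) : Set F) ∧
    FiniteDimensional ℂ (F ⧸ LinearMap.range (T : E →ₗ[ℂ] F))

open Filter Topology
open scoped InnerProductSpace InnerProduct

section LeftParametrix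

variable {E F : Type*} [NormedAddCommGroup E] [NormedAddCommGroup F]

section NontriviallyNormedField

variable {𝕜 : Type*} [NontriviallyNormedField 𝕜] [NormedSpace 𝕜 E] [NormedSpace 𝕜 F]

theorem finiteDimensional_ker_of_isCompactOperator_comp_sub_one [CompleteSpace 𝕜] (T : E →L[𝕜] F)
    (S : F →L[𝕜] E) (h : IsCompactOperator ⇑(S ∘L T - 1)) : FiniteDimensional 𝕜 T.ker := by
  set K := S ∘L T - 1
  have hK : ∀ x ∈ T.ker, K x = -x := fun x (hx : T x = 0) ↦ by simp [K, hx]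
  have hmaps : ∀ x ∈ T.ker, (K : E →ₗ[𝕜] E) x ∈ T.ker := fun x hx ↦ by
    simpa [hK x hx] using hx
  have hid : (id : T.ker → T.ker) = -((K : E →ₗ[𝕜] E).restrict hmaps) := by
    funext x
    ext
    simp [hK x x.2]
  exact .of_isCompactOperator_id (hid ▸ (h.restrict hmaps T.isClosed_ker).neg)

theorem exists_tendsto_subseq_of_isCompactOperator_comp_sub_one (T : E →L[𝕜] F) (S : F →L[𝕜] E)
    (h : IsCompactOperator ⇑(S ∘L T - 1)) {u : ℕ → E} (hu : ∀ n, ‖u n‖ ≤ 1)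
    (hTu : Tendsto (T ∘ u) atTop (𝓝 0)) :
    ∃ y, ∃ φ : ℕ → ℕ, StrictMono φ ∧ Tendsto (u ∘ φ) atTop (𝓝 y) := by
  set K := S ∘L T - 1
  obtain ⟨C, hC, hKC⟩ := h.image_closedBall_subset_compact (𝕜₁ := 𝕜) 1
  obtain ⟨z, -, φ, hφ, hKu⟩ := hC.tendsto_subseq fun n ↦
    hKC ⟨u n, mem_closedBall_zero_iff.mpr (hu n), rfl⟩
  have hSTu : Tendsto (S ∘ T ∘ u ∘ φ) atTop (𝓝 0) := by
    simpa [Function.comp_assoc] using (S.continuous.tendsto 0).comp (hTu.comp hφ.tendsto_atTop)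
  -- `u = S (T u) - K u`, and both terms converge along `φ`
  refine ⟨-z, φ, hφ, ?_⟩
  convert hSTu.sub hKu using 1
  · ext n; simp [K]
  · simp

end NontriviallyNormedField

variable {𝕜 : Type*} [RCLike 𝕜] [NormedSpace 𝕜 E] [NormedSpace 𝕜 F]

theorem exists_pos_mul_norm_le_of_isCompactOperator_comp_sub_one (T : E →L[𝕜] F) (S : F →L[𝕜] E)
    (h : IsCompactOperator ⇑(S ∘L T - 1)) {M : Submodule 𝕜 E} (hM : IsClosed (M : Set E))
    (hMT : Disjoint M T.ker) : ∃ c > 0, ∀ x ∈ M, c * ‖x‖ ≤ ‖T x‖ := by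
  by_contra! hsmall
  have hunit : ∀ n : ℕ, ∃ u ∈ M, ‖u‖ = 1 ∧ ‖T u‖ < 1 / (n + 1) := by
    intro n
    obtain ⟨x, hxM, hx⟩ := hsmall (1 / (n + 1)) (by positivity)
    have hx0 : x ≠ 0 := by rintro rfl; simp at hx
    refine ⟨(‖x‖⁻¹ : 𝕜) • x, M.smul_mem _ hxM, norm_smul_inv_norm hx0, ?_⟩
    rw [map_smul, norm_smul, norm_inv, RCLike.norm_ofReal, abs_norm,
      inv_mul_lt_iff₀ (norm_pos_iff.mpr hx0), mul_comm]
    exact hx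
  choose u huM hu1 huT using hunit
  have hTu : Tendsto (T ∘ u) atTop (𝓝 0) :=
    squeeze_zero_norm (fun n ↦ (huT n).le) tendsto_one_div_add_atTop_nhds_zero_nat
  obtain ⟨y, φ, hφ, hy⟩ :=
    exists_tendsto_subseq_of_isCompactOperator_comp_sub_one T S h (fun n ↦ (hu1 n).le) hTu
  have hyM : y ∈ M := hM.mem_of_tendsto hy (.of_forall fun n ↦ huM (φ n))
  have hyT : T y = 0 :=
    tendsto_nhds_unique ((T.continuous.tendsto y).comp hy) (hTu.comp hφ.tendsto_atTop)
  have hy1 : ‖y‖ = 1 := tendsto_nhds_unique hy.norm (by simp [hu1])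
  simp [Submodule.disjoint_def.mp hMT y hyM hyT] at hy1

theorem isClosed_range_of_isCompactOperator_comp_sub_one [CompleteSpace E] (T : E →L[𝕜] F)
    (S : F →L[𝕜] E) (h : IsCompactOperator ⇑(S ∘L T - 1)) : IsClosed (T.range : Set F) := by
  have := finiteDimensional_ker_of_isCompactOperator_comp_sub_one T S h
  obtain ⟨M, hM, hTM⟩ :=
    (Submodule.ClosedComplemented.of_finiteDimensional T.ker).exists_isClosed_isCompl
  obtain ⟨c, hc, hbound⟩ :=
    exists_pos_mul_norm_le_of_isCompactOperator_comp_sub_one T S h hM hTM.symm.disjoint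
  have : CompleteSpace M := hM.completeSpace_coe
  have hanti : AntilipschitzWith ⟨c⁻¹, by positivity⟩ (T ∘L M.subtypeL) :=
    (T ∘L M.subtypeL).antilipschitz_of_bound fun x ↦ by
      show ‖(x : E)‖ ≤ c⁻¹ * ‖T x‖
      rw [inv_mul_eq_div, le_div_iff₀ hc, mul_comm]
      exact hbound x x.2
  have hrange : T.range = LinearMap.range ((T : E →ₗ[𝕜] F) ∘ₗ M.subtype) := by
    rw [LinearMap.range_comp, Submodule.range_subtype, LinearMap.range_eq_map, ← hTM.sup_eq_top,
      Submodule.map_sup, LinearMap.le_ker_iff_map.mp le_rfl, bot_sup_eq]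
  rw [hrange, LinearMap.coe_range]
  exact hanti.isClosed_range (T ∘L M.subtypeL).uniformContinuous

end LeftParametrix

theorem isFredholm_of_isCompactOperator_adjoint_parametrix {E F : Type*}
    [NormedAddCommGroup E] [InnerProductSpace ℂ E] [CompleteSpace E]
    [NormedAddCommGroup F] [InnerProductSpace ℂ F] [CompleteSpace F] (T : E →L[ℂ] F)
    (hl : IsCompactOperator ⇑(T† ∘L T - 1)) (hr : IsCompactOperator ⇑(T ∘L T† - 1)) :
    IsFredholm T := by
  have hclosed := isClosed_range_of_isCompactOperator_comp_sub_one T (T†) hl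
  have : CompleteSpace T.range := hclosed.completeSpace_coe
  have : FiniteDimensional ℂ T.rangeᗮ := by
    rw [T.orthogonal_range]
    exact finiteDimensional_ker_of_isCompactOperator_comp_sub_one (T†) T hr
  exact ⟨finiteDimensional_ker_of_isCompactOperator_comp_sub_one T (T†) hl, hclosed,
    (Submodule.quotientEquivOfIsCompl _ _ T.range.isCompl_orthogonal).symm.finiteDimensional⟩

namespace ContinuousLinearMap

theorem IsIdempotentElem.apply_of_mem_range {R M : Type*} [Semiring R] [TopologicalSpace M]
    [AddCommMonoid M] [Module R M] {p : M →L[R] M} (hp : IsIdempotentElem p) {x : M}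
    (hx : x ∈ p.range) : p x = x :=
  (LinearMap.IsIdempotentElem.mem_range_iff (isIdempotentElem_toLinearMap_iff.mpr hp)).mp hx

end ContinuousLinearMap

section CompressedOp

open ContinuousLinearMap

variable {E : Type*} [NormedAddCommGroup E] [InnerProductSpace ℂ E]

@[simp]
theorem compressedOp_apply (P Q : E →L[ℂ] E) (x : LinearMap.range (P : E →ₗ[ℂ] E)) :
    (compressedOp P Q x : E) = Q x :=
  rfl

theorem isCompactOperator_compressedOp_comp_compressedOp_sub_one {P Q : E →L[ℂ] E}
    (hP : IsIdempotentElem P) (hQP : IsCompactOperator ⇑(Q - P)) :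
    IsCompactOperator ⇑(compressedOp Q P ∘L compressedOp P Q - 1) := by
  set V := LinearMap.range (P : E →ₗ[ℂ] E)
  have hV : ∀ x : V, (⇑P ∘ ⇑(Q - P) ∘ Subtype.val) x ∈ V := fun _ ↦ LinearMap.mem_range_self _ _
  have heq : ⇑(compressedOp Q P ∘L compressedOp P Q - 1) =
      Set.codRestrict (⇑P ∘ ⇑(Q - P) ∘ Subtype.val) V hV := by
    funext x
    ext
    simp [IsIdempotentElem.apply_of_mem_range hP x.2]
  rw [heq]
  exact ((hQP.comp_clm V.subtypeL).clm_comp P).codRestrict hV (IsIdempotentElem.isClosed_range hP)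

theorem adjoint_compressedOp [CompleteSpace E] {P Q : E →L[ℂ] E} (hP : IsOrthProj P)
    (hQ : IsOrthProj Q) [CompleteSpace (LinearMap.range (P : E →ₗ[ℂ] E))]
    [CompleteSpace (LinearMap.range (Q : E →ₗ[ℂ] E))] :
    (compressedOp P Q)† = compressedOp Q P := by
  refine ((eq_adjoint_iff _ _).mpr fun x y ↦ ?_).symm
  simp only [Submodule.coe_inner, compressedOp_apply]
  calc ⟪P x, y⟫_ℂ = ⟪(x : E), P y⟫_ℂ := hP.2.isSymmetric _ _
    _ = ⟪Q x, y⟫_ℂ := by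
      rw [IsIdempotentElem.apply_of_mem_range hP.1 y.2,
        IsIdempotentElem.apply_of_mem_range hQ.1 x.2]
    _ = ⟪(x : E), Q y⟫_ℂ := hQ.2.isSymmetric _ _

end CompressedOp

theorem compressedOp_fredholm_with_parametrix (P Q : H →L[ℂ] H)
    (hP : IsOrthProj P) (hQ : IsOrthProj Q) (hPQ : IsCompactOperator ⇑(P - Q)) :
    IsFredholm (compressedOp P Q) ∧
      IsCompactOperator ⇑((compressedOp P Q).comp (compressedOp Q P) - 1) ∧
      IsCompactOperator ⇑((compressedOp Q P).comp (compressedOp P Q) - 1) := by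
  have hQP : IsCompactOperator ⇑(Q - P) := by simpa using hPQ.neg
  have hl := isCompactOperator_compressedOp_comp_compressedOp_sub_one hP.1 hQP
  have hr := isCompactOperator_compressedOp_comp_compressedOp_sub_one hQ.1 hPQ
  have : CompleteSpace (LinearMap.range (P : H →ₗ[ℂ] H)) :=
    (ContinuousLinearMap.IsIdempotentElem.isClosed_range hP.1).completeSpace_coe
  have : CompleteSpace (LinearMap.range (Q : H →ₗ[ℂ] H)) :=
    (ContinuousLinearMap.IsIdempotentElem.isClosed_range hQ.1).completeSpace_coe
  refine ⟨isFredholm_of_isCompactOperator_adjoint_parametrix _ ?_ ?_, hr, hl⟩ <;>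
    rwa [adjoint_compressedOp hP hQ]
end
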